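/- Safety invariance of the vertex-network policy: suppose for every state x ∈ 𝒳 the set 𝒰ₓ = {u ∈ 𝒰 : f(x) + H(x)u ∈ 𝒳} is nonempty and the policy outputs u(x) ∈ convexHull(Vₓ) where Vₓ is a finite set of points contained in 𝒰ₓ. If 𝒳 is convex and x₀ ∈ 𝒳, then the trajectory defined by x_{t+1} = f(x_t) + H(x_t)u(x_t) satisfies x_t ∈ 𝒳 and u(x_t) ∈ 𝒰 for all t. -/

import Mathlib

/-! The admissible inputs at a state `x`, `{u ∈ U | f x + H x u ∈ X}`, form a convex set, being
the intersection of `U` with the preimage of `X` under an affine map. It therefore contains the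
convex hull of the vertices `V x`, hence the policy output. So the closed-loop map sends `X` into
itself, and the trajectory stays in `X` by induction. -/

theorem Convex.sep_add_linear_mem {𝕜 E F : Type*} [Ring 𝕜] [PartialOrder 𝕜]
    [AddCommGroup E] [Module 𝕜 E] [AddCommGroup F] [Module 𝕜 F] {U : Set E} {X : Set F}
    (hU : Convex 𝕜 U) (hX : Convex 𝕜 X) (c : F) (A : E →ₗ[𝕜] F) :
    Convex 𝕜 {u ∈ U | c + A u ∈ X} :=
  hU.inter ((hX.translate_preimage_right c).linear_preimage A)

theorem Set.MapsTo.mem_of_succ_eq {α : Type*} {S : Set α} {g : α → α} (hg : Set.MapsTo g S S)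
    {x : ℕ → α} (h0 : x 0 ∈ S) (hsucc : ∀ t, x (t + 1) = g (x t)) (t : ℕ) : x t ∈ S := by
  induction t with
  | zero => exact h0
  | succ t ih => exact hsucc t ▸ hg ih

theorem stmt_7_general (n m : ℕ) (f : (Fin n → ℝ) → (Fin n → ℝ))
    (H : (Fin n → ℝ) → Matrix (Fin n) (Fin m) ℝ)
    (X : Set (Fin n → ℝ)) (U : Set (Fin m → ℝ))
    (hX : Convex ℝ X) (hU : Convex ℝ U)
    (V : (Fin n → ℝ) → Finset (Fin m → ℝ))
    (pol : (Fin n → ℝ) → (Fin m → ℝ))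
    (hV : ∀ x ∈ X, (V x : Set (Fin m → ℝ)) ⊆
      {u ∈ U | f x + (H x).mulVec u ∈ X})
    (hpol : ∀ x ∈ X, pol x ∈ convexHull ℝ (V x : Set (Fin m → ℝ)))
    (x₀ : Fin n → ℝ) (hx₀ : x₀ ∈ X)
    (traj : ℕ → (Fin n → ℝ))
    (htraj0 : traj 0 = x₀)
    (htraj : ∀ t, traj (t + 1) = f (traj t) + (H (traj t)).mulVec (pol (traj t))) :
    ∀ t, traj t ∈ X ∧ pol (traj t) ∈ U := by
  have hadmissible : ∀ x ∈ X, pol x ∈ {u ∈ U | f x + (H x).mulVec u ∈ X} := fun x hx =>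
    convexHull_min (hV x hx) (hU.sep_add_linear_mem hX (f x) (H x).mulVecLin) (hpol x hx)
  have hinvariant : Set.MapsTo (fun x => f x + (H x).mulVec (pol x)) X X :=
    fun x hx => (hadmissible x hx).2
  have hX_traj : ∀ t, traj t ∈ X := hinvariant.mem_of_succ_eq (htraj0 ▸ hx₀) htraj
  exact fun t => ⟨hX_traj t, (hadmissible _ (hX_traj t)).1⟩

theorem stmt_7 (n m : ℕ) (f : (Fin n → ℝ) → (Fin n → ℝ))
    (H : (Fin n → ℝ) → Matrix (Fin n) (Fin m) ℝ)
    (X : Set (Fin n → ℝ)) (U : Set (Fin m → ℝ))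
    (hX : Convex ℝ X) (hU : Convex ℝ U)
    (V : (Fin n → ℝ) → Finset (Fin m → ℝ))
    (pol : (Fin n → ℝ) → (Fin m → ℝ))
    (hV : ∀ x ∈ X, (V x : Set (Fin m → ℝ)) ⊆
      {u ∈ U | f x + (H x).mulVec u ∈ X})
    (hne : ∀ x ∈ X, {u ∈ U | f x + (H x).mulVec u ∈ X}.Nonempty)
    (hpol : ∀ x ∈ X, pol x ∈ convexHull ℝ (V x : Set (Fin m → ℝ)))
    (x₀ : Fin n → ℝ) (hx₀ : x₀ ∈ X)
    (traj : ℕ → (Fin n → ℝ))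
    (htraj0 : traj 0 = x₀)
    (htraj : ∀ t, traj (t + 1) = f (traj t) + (H (traj t)).mulVec (pol (traj t))) :
    ∀ t, traj t ∈ X ∧ pol (traj t) ∈ U :=
  stmt_7_general n m f H X U hX hU V pol hV hpol x₀ hx₀ traj htraj0 htraj
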